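/- Let 𝒲 ⊂ Λ be a finite saturated set of weights, regarded as a subposet of Λ in the induced order. Then: (1) for μ, ν ∈ 𝒲, ν covers μ in 𝒲 if and only if μ + α_i = ν for some i ∈ I; (2) coloring each covering edge μ → ν by the (unique) i with μ + α_i = ν, every i-component of 𝒲 is a chain, for each i ∈ I; (3) the poset 𝒲 is ranked; (4) for every μ ∈ 𝒲, m_i(μ) = ⟨μ, α_i∨⟩ for all i ∈ I, so wt(μ) = μ and hence 𝒲 is an M_Φ-structured poset. -/

import Mathlib

open scoped BigOperators RealInnerProductSpace

noncomputable section

/-- The coroot `β∨ = (2/⟨β,β⟩) β` of a vector `β`. -/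
def coroot {E : Type*} [NormedAddCommGroup E] [InnerProductSpace ℝ E] (β : E) : E :=
  (2 / ⟪β, β⟫) • β

/-- The reflection `v ↦ v - ⟨v, β∨⟩ β` determined by `β`, as a plain function. -/
def rootReflection {E : Type*} [NormedAddCommGroup E] [InnerProductSpace ℝ E] (β v : E) : E :=
  v - ⟪v, coroot β⟫ • β

/-- The determinant (sign) of a linear automorphism, as an integer (`±1` on the Weyl group). -/
def sgnDet {E : Type*} [NormedAddCommGroup E] [InnerProductSpace ℝ E] (w : E ≃ₗ[ℝ] E) : ℤ :=
  if LinearMap.det (w : E →ₗ[ℝ] E) = 1 then 1 else -1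

/-- A finite crystallographic root system `Φ` spanning the real inner-product space `E`,
with a fixed base of simple roots `{αᵢ}_{i ∈ I}` (a basis of `E`), together with the
corresponding fundamental weights `{ωᵢ}` (the basis dual to the simple coroots). -/
structure RootSystemBase (E : Type*) [NormedAddCommGroup E] [InnerProductSpace ℝ E]
    (I : Type*) [Fintype I] [DecidableEq I] where
  Φ : Set E
  finite : Φ.Finite
  zero_not_mem : (0 : E) ∉ Φ
  neg_mem : ∀ β ∈ Φ, -β ∈ Φ
  αBasis : Module.Basis I ℝ E
  simple_mem : ∀ i, αBasis i ∈ Φ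
  reflect_mem : ∀ β ∈ Φ, ∀ γ ∈ Φ, rootReflection β γ ∈ Φ
  crystallographic : ∀ β ∈ Φ, ∀ γ ∈ Φ, ∃ k : ℤ, ⟪γ, coroot β⟫ = (k : ℝ)
  reduced : ∀ β ∈ Φ, ∀ t : ℝ, t • β ∈ Φ → t = 1 ∨ t = -1
  base_int : ∀ β ∈ Φ, ∀ i, ∃ k : ℤ, αBasis.repr β i = (k : ℝ)
  base_signs : ∀ β ∈ Φ, (∀ i, 0 ≤ αBasis.repr β i) ∨ (∀ i, αBasis.repr β i ≤ 0)
  ω : I → E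
  ω_dual : ∀ i j, ⟪ω i, coroot (αBasis j)⟫ = if i = j then (1 : ℝ) else 0

namespace RootSystemBase

variable {E : Type*} [NormedAddCommGroup E] [InnerProductSpace ℝ E]
  {I : Type*} [Fintype I] [DecidableEq I]

variable (S : RootSystemBase E I)

/-- The simple roots. -/
def α (i : I) : E := S.αBasis i

/-- The set `Φ⁺` of positive roots. -/
def pos : Set E := {β | β ∈ S.Φ ∧ ∀ i, 0 ≤ S.αBasis.repr β i}

/-- The set `Φ⁻` of negative roots. -/
def neg : Set E := {β | β ∈ S.Φ ∧ ∀ i, S.αBasis.repr β i ≤ 0}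

/-- The Weyl group `W`: the subgroup of the linear automorphism group of `E`
generated by the simple reflections. -/
def W : Subgroup (E ≃ₗ[ℝ] E) :=
  Subgroup.closure {w : E ≃ₗ[ℝ] E | ∃ i, ∀ v, w v = rootReflection (S.α i) v}

/-- `μ` lies in the weight lattice `Λ` (the ℤ-span of the fundamental weights). -/
def IsWeight (μ : E) : Prop := ∃ c : I → ℤ, μ = ∑ i, (c i : ℝ) • S.ω i

/-- `μ` is a dominant weight (a nonnegative-integer combination of the `ωᵢ`). -/
def IsDominant (μ : E) : Prop := ∃ c : I → ℕ, μ = ∑ i, (c i : ℝ) • S.ω i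

/-- `μ` is a strongly dominant weight. -/
def IsStronglyDominant (μ : E) : Prop :=
  ∃ c : I → ℤ, (∀ i, 0 < c i) ∧ μ = ∑ i, (c i : ℝ) • S.ω i

/-- The partial order on `Λ`: `μ ≤ ν` iff `ν - μ` is a nonnegative-integer combination
of simple roots. -/
def wle (μ ν : E) : Prop := ∃ k : I → ℕ, ν - μ = ∑ i, (k i : ℝ) • S.α i

/-- `ϱ`, the sum of the fundamental weights. -/
def rho : E := ∑ i, S.ω i

/-- `ϱ∨ = Σᵢ (2/⟨αᵢ,αᵢ⟩) ωᵢ`. -/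
def rhoCheck : E := ∑ i, (2 / ⟪S.α i, S.α i⟫) • S.ω i

/-- The weight diagram `Π(λ)` of a dominant weight. -/
def PiWt (lam : E) : Set E :=
  {μ | S.IsWeight μ ∧
    ∃ w : E ≃ₗ[ℝ] E, w ∈ S.W ∧ ∃ ν : E, S.IsDominant ν ∧ S.wle ν lam ∧ μ = w ν}

/-- A saturated set of weights. -/
def Saturated (A : Set E) : Prop :=
  ∀ ν ∈ A, ∀ β ∈ S.Φ, ∀ k : ℤ,
    (((0 : ℝ) ≤ (k : ℝ) ∧ (k : ℝ) ≤ ⟪ν, coroot β⟫) ∨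
      (⟪ν, coroot β⟫ ≤ (k : ℝ) ∧ (k : ℝ) ≤ 0)) →
    ν - (k : ℝ) • β ∈ A

/-- The `W`-orbit of `lam`. -/
def orbit (lam : E) : Set E := {μ | ∃ w : E ≃ₗ[ℝ] E, w ∈ S.W ∧ μ = w lam}

end RootSystemBase

/-- `e^μ`, a basis element of the group ring. -/
def expw {E : Type*} [AddCommGroup E] (μ : E) : AddMonoidAlgebra ℤ E :=
  AddMonoidAlgebra.single μ 1

/-- The coefficient of `e^μ` in `φ`. -/
def coeffOf {E : Type*} [AddCommGroup E] (φ : AddMonoidAlgebra ℤ E) (μ : E) : ℤ :=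
  φ.coeff μ

/-- The support of an element of the group ring. -/
def suppOf {E : Type*} [AddCommGroup E] (φ : AddMonoidAlgebra ℤ E) : Finset E :=
  φ.coeff.support

/-- The action `w ⬝ e^μ = e^{w(μ)}` of a linear automorphism on the group ring. -/
def actGR {E : Type*} [NormedAddCommGroup E] [InnerProductSpace ℝ E]
    (w : E ≃ₗ[ℝ] E) (φ : AddMonoidAlgebra ℤ E) : AddMonoidAlgebra ℤ E :=
  AddMonoidAlgebra.ofCoeff (Finsupp.mapDomain (⇑w) φ.coeff)

namespace RootSystemBase

variable {E : Type*} [NormedAddCommGroup E] [InnerProductSpace ℝ E]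
  {I : Type*} [Fintype I] [DecidableEq I]
variable (S : RootSystemBase E I)

/-- `φ` lies in the group ring `ℤ[Λ]`. -/
def InGroupRing (φ : AddMonoidAlgebra ℤ E) : Prop := ∀ μ ∈ suppOf φ, S.IsWeight μ

/-- `φ` is a Weyl alternant: `w ⬝ φ = det(w) φ` for all `w ∈ W`. -/
def IsAlternant (φ : AddMonoidAlgebra ℤ E) : Prop :=
  ∀ w : E ≃ₗ[ℝ] E, w ∈ S.W → actGR w φ = sgnDet w • φ

/-- `φ` is `W`-invariant. -/
def IsInvariant (φ : AddMonoidAlgebra ℤ E) : Prop :=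
  ∀ w : E ≃ₗ[ℝ] E, w ∈ S.W → actGR w φ = φ

/-- The alternation operator `𝒜(φ) = Σ_{w ∈ W} det(w) (w ⬝ φ)`. -/
def Alt (φ : AddMonoidAlgebra ℤ E) : AddMonoidAlgebra ℤ E :=
  ∑ᶠ w : S.W, sgnDet (w : E ≃ₗ[ℝ] E) • actGR (w : E ≃ₗ[ℝ] E) φ

/-- `χ` is the Weyl bialternant attached to the dominant weight `lam`:  the unique
element of `ℤ[Λ]` with `𝒜(e^ϱ) ⬝ χ = 𝒜(e^{lam+ϱ})`. -/
def IsBialternant (lam : E) (χ : AddMonoidAlgebra ℤ E) : Prop :=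
  S.InGroupRing χ ∧ S.Alt (expw S.rho) * χ = S.Alt (expw (lam + S.rho))

end RootSystemBase

/-!
Saturation along a root `β` says that the `β`-string `{t : ℤ | μ + t β ∈ 𝒲}` contains, with
each `t`, every integer between `t` and its mirror image `-⟨μ, β∨⟩ - t`; this pins down the
ends of the string and gives `(4)`. If `ν` covers `μ`, some simple root `αⱼ` in the support
of `ν - μ` has `⟨ν - μ, αⱼ⟩ > 0`; then `⟨ν, αⱼ∨⟩ > ⟨μ, αⱼ∨⟩`, so saturation puts `ν - αⱼ` or
`μ + αⱼ` into `𝒲` between `μ` and `ν`, forcing `ν = μ + αⱼ`. Covers thus raise the height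
(the sum of the coordinates in the simple roots) by exactly one, and the height minus its
minimum over the connected component is a rank function.
-/

section Rank

variable {α : Type*} {s : Set α} {Adj : α → α → Prop}

theorem mem_of_reflTransGen (hs : ∀ x y, Adj x y → y ∈ s) {a b : α}
    (hab : Relation.ReflTransGen Adj a b) (ha : a ∈ s) : b ∈ s := by
  induction hab with
  | refl => exact ha
  | tail _ hbc _ => exact hs _ _ hbc

/-- A discrete intermediate value theorem. -/
theorem exists_eq_of_reflTransGen {f : α → ℤ} (hf : ∀ x y, Adj x y → f y ≤ f x + 1) {a b : α}
    (hab : Relation.ReflTransGen Adj a b) {n : ℤ} (han : f a ≤ n) (hnb : n ≤ f b) :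
    ∃ z, Relation.ReflTransGen Adj a z ∧ f z = n := by
  induction hab with
  | refl => exact ⟨a, .refl, le_antisymm han hnb⟩
  | @tail b c hab hbc ih =>
    by_cases hn : n ≤ f b
    · exact ih hn
    · exact ⟨c, hab.tail hbc, le_antisymm (by linarith [hf b c hbc]) hnb⟩

theorem exists_rank_of_adj [Std.Symm Adj] (hfin : s.Finite) (hne : s.Nonempty)
    (hs : ∀ x y, Adj x y → y ∈ s) {h : α → ℤ} (hh : ∀ x y, Adj x y → h y ≤ h x + 1) :
    ∃ (L : ℕ) (r : α → ℕ), (∀ n ≤ L, ∃ x ∈ s, r x = n) ∧ (∀ x ∈ s, r x ≤ L) ∧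
      ∀ x y, Adj x y → (r y : ℤ) - r x = h y - h x := by
  let R := Relation.ReflTransGen Adj
  let m : α → ℤ := fun x => sInf (h '' {y | R x y})
  have hfin_comp : ∀ x ∈ s, (h '' {y | R x y}).Finite := fun x hx =>
    (hfin.subset fun _ hy => mem_of_reflTransGen hs hy hx).image h
  have m_le : ∀ x ∈ s, m x ≤ h x := fun x hx =>
    csInf_le (hfin_comp x hx).bddBelow ⟨x, .refl, rfl⟩
  have m_mem : ∀ x ∈ s, ∃ y, R x y ∧ h y = m x := fun x hx =>
    Int.csInf_mem (s := h '' {y | R x y}) ⟨h x, x, .refl, rfl⟩ (hfin_comp x hx).bddBelow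
  have m_eq : ∀ x y, R x y → m x = m y := by
    intro x y hxy
    have : {z | R x z} = {z | R y z} :=
      Set.ext fun _ => ⟨(Std.Symm.symm _ _ hxy).trans, hxy.trans⟩
    simp only [m, this]
  let r : α → ℕ := fun x => (h x - m x).toNat
  have r_eq : ∀ x ∈ s, (r x : ℤ) = h x - m x := fun x hx =>
    Int.toNat_of_nonneg (sub_nonneg.2 (m_le x hx))
  have r_step : ∀ x y, Adj x y → (r y : ℤ) - r x = h y - h x := by
    intro x y hxy
    rw [r_eq x (hs _ _ (Std.Symm.symm _ _ hxy)), r_eq y (hs _ _ hxy), m_eq x y (.single hxy)]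
    ring
  obtain ⟨x, hx, hmax⟩ := Set.exists_max_image s r hfin hne
  refine ⟨r x, r, fun n hn => ?_, hmax, r_step⟩
  -- walk up from a point of minimal height in the component of `x`
  obtain ⟨y, hxy, hy⟩ := m_mem x hx
  have hys : y ∈ s := mem_of_reflTransGen hs hxy hx
  have hry : (r y : ℤ) = 0 := by rw [r_eq y hys, hy, m_eq x y hxy, sub_self]
  obtain ⟨z, hyz, hz⟩ := exists_eq_of_reflTransGen (f := fun z => (r z : ℤ))
    (fun a b hab => by linarith [r_step a b hab, hh a b hab]) (Std.Symm.symm _ _ hxy)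
    (n := n) (by omega) (by exact_mod_cast hn)
  exact ⟨z, mem_of_reflTransGen hs hyz hys, by exact_mod_cast hz⟩

end Rank

theorem Int.eq_sub_of_reflect_closed {T : Set ℤ} {p a b : ℤ}
    (hT : ∀ t ∈ T, ∀ k, (t ≤ k ∧ k ≤ -p - t) ∨ (-p - t ≤ k ∧ k ≤ t) → k ∈ T)
    (hab : -a ≤ b) (ha : -a ∈ T) (ha' : -a - 1 ∉ T) (hb : b ∈ T) (hb' : b + 1 ∉ T) :
    p = a - b := by
  rcases lt_trichotomy p (a - b) with h | h | h
  · exact (hb' (hT _ ha _ (by omega))).elim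
  · exact h
  · exact (ha' (hT _ hb _ (by omega))).elim

theorem exists_sub_eq_intCast_smul_of_reflTransGen {E : Type*} [AddCommGroup E] [Module ℝ E]
    {β μ ν : E} (h : Relation.ReflTransGen (fun x y => x + β = y ∨ y + β = x) μ ν) :
    ∃ k : ℤ, ν - μ = (k : ℝ) • β := by
  induction h with
  | refl => exact ⟨0, by simp⟩
  | @tail x y _ hxy ih =>
    obtain ⟨k, hk⟩ := ih
    rcases hxy with rfl | rfl
    · exact ⟨k + 1, by rw [add_sub_right_comm, hk]; push_cast; module⟩
    · exact ⟨k - 1, by rw [show y - μ = y + β - μ - β by abel, hk]; push_cast; module⟩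

section Coroot

variable {E : Type*} [NormedAddCommGroup E] [InnerProductSpace ℝ E] {β : E}

theorem inner_coroot_self (hβ : β ≠ 0) : ⟪β, coroot β⟫ = 2 := by
  have := (inner_self_ne_zero (𝕜 := ℝ)).2 hβ
  rw [coroot, real_inner_smul_right]
  field_simp

theorem inner_add_smul_coroot (hβ : β ≠ 0) (x : E) (t : ℝ) :
    ⟪x + t • β, coroot β⟫ = ⟪x, coroot β⟫ + 2 * t := by
  rw [inner_add_left, real_inner_smul_left, inner_coroot_self hβ]
  ring

theorem inner_coroot_pos {x : E} (hβ : β ≠ 0) (h : 0 < ⟪x, β⟫) : 0 < ⟪x, coroot β⟫ := by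
  have := real_inner_self_pos.2 hβ
  rw [coroot, real_inner_smul_right]
  positivity

theorem Module.Basis.exists_repr_pos_inner_pos {ι : Type*} [Fintype ι] (b : Module.Basis ι ℝ E)
    {d : E} (hd : d ≠ 0) (hnonneg : ∀ i, 0 ≤ b.repr d i) :
    ∃ j, 0 < b.repr d j ∧ 0 < ⟪d, b j⟫ := by
  have hpos : ∑ _i : ι, (0 : ℝ) < ∑ i, b.repr d i * ⟪d, b i⟫ := by
    simpa [← real_inner_smul_right, ← inner_sum, b.sum_repr] using real_inner_self_pos.2 hd
  obtain ⟨j, -, hj⟩ := Finset.exists_lt_of_sum_lt hpos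
  exact ⟨j, pos_and_pos_or_neg_and_neg_of_mul_pos hj |>.resolve_right
    fun h => (hnonneg j).not_gt h.1⟩

end Coroot

namespace RootSystemBase

variable {E : Type*} [NormedAddCommGroup E] [InnerProductSpace ℝ E]
  {I : Type*} [Fintype I] [DecidableEq I] (S : RootSystemBase E I)

def height : E →ₗ[ℝ] ℝ := ∑ i, S.αBasis.coord i

def CoversIn (A : Set E) (μ ν : E) : Prop :=
  S.wle μ ν ∧ μ ≠ ν ∧ ∀ ξ ∈ A, S.wle μ ξ → S.wle ξ ν → ξ = μ ∨ ξ = ν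

variable {S}

theorem ne_zero_of_mem {β : E} (hβ : β ∈ S.Φ) : β ≠ 0 :=
  fun h => S.zero_not_mem (h ▸ hβ)

theorem α_mem (i : I) : S.α i ∈ S.Φ :=
  S.simple_mem i

theorem α_ne_zero (i : I) : S.α i ≠ 0 :=
  ne_zero_of_mem (α_mem i)

theorem height_α (i : I) : S.height (S.α i) = 1 := by
  simp [height, α, Finsupp.single_apply]

theorem floor_height_add_α (x : E) (i : I) : ⌊S.height (x + S.α i)⌋ = ⌊S.height x⌋ + 1 := by
  rw [map_add, height_α, Int.floor_add_one]

theorem IsWeight.exists_inner_coroot_eq {μ : E} (hμ : S.IsWeight μ) (i : I) :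
    ∃ k : ℤ, ⟪μ, coroot (S.α i)⟫ = k := by
  obtain ⟨c, rfl⟩ := hμ
  refine ⟨c i, ?_⟩
  simp [sum_inner, real_inner_smul_left, α, S.ω_dual]

section Order

variable {μ ν : E}

theorem wle_iff_repr : S.wle μ ν ↔ ∀ i, ∃ n : ℕ, S.αBasis.repr (ν - μ) i = n := by
  constructor
  · rintro ⟨k, hk⟩ i
    exact ⟨k i, by rw [hk]; exact congrFun (S.αBasis.repr_sum_self _) i⟩
  · intro h
    choose k hk using h
    refine ⟨k, ?_⟩
    rw [← S.αBasis.sum_repr (ν - μ)]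
    simp only [hk]
    rfl

theorem wle_of_sub_eq_natCast_smul (i : I) (n : ℕ) (h : ν - μ = (n : ℝ) • S.α i) :
    S.wle μ ν :=
  ⟨Pi.single i n, by simp [h, Pi.single_apply]⟩

theorem wle_or_wle_of_sub_eq_intCast_smul (i : I) (k : ℤ) (h : ν - μ = (k : ℝ) • S.α i) :
    S.wle μ ν ∨ S.wle ν μ := by
  rcases Int.eq_nat_or_neg k with ⟨n, rfl | rfl⟩
  · exact .inl (wle_of_sub_eq_natCast_smul i n (by simpa using h))
  · exact .inr (wle_of_sub_eq_natCast_smul i n (by rw [← neg_sub, h]; simp))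

theorem exists_height_eq_add_of_wle (h : S.wle μ ν) :
    ∃ n : ℕ, S.height ν = S.height μ + n := by
  obtain ⟨k, hk⟩ := h
  refine ⟨∑ i, k i, ?_⟩
  rw [← sub_eq_iff_eq_add', ← map_sub, hk]
  simp [height_α]

theorem eq_of_wle_of_height_eq (h : S.wle μ ν) (hh : S.height μ = S.height ν) : μ = ν := by
  obtain ⟨k, hk⟩ := h
  have hsum : ∑ i, k i = 0 := by
    have : ((∑ i, k i : ℕ) : ℝ) = 0 := by
      rw [← sub_eq_zero.2 hh.symm, ← map_sub, hk]
      simp [height_α]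
    exact_mod_cast this
  have hk0 := Finset.sum_eq_zero_iff.1 hsum
  rw [eq_comm, ← sub_eq_zero, hk]
  simp [hk0]

theorem wle_sub_α (h : S.wle μ ν) {j : I} (hj : 1 ≤ S.αBasis.repr (ν - μ) j) :
    S.wle μ (ν - S.α j) := by
  rw [wle_iff_repr] at h ⊢
  intro i
  obtain ⟨n, hn⟩ := h i
  rw [sub_right_comm, map_sub, Finsupp.sub_apply, hn, α, Module.Basis.repr_self,
    Finsupp.single_apply]
  split_ifs with hji
  · subst hji
    refine ⟨n - 1, ?_⟩
    rw [hn] at hj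
    rw [Nat.cast_sub (by exact_mod_cast hj)]
    simp
  · exact ⟨n, by simp⟩

theorem add_α_wle (h : S.wle μ ν) {j : I} (hj : 1 ≤ S.αBasis.repr (ν - μ) j) :
    S.wle (μ + S.α j) ν := by
  obtain ⟨k, hk⟩ := wle_sub_α h hj
  exact ⟨k, by rw [← hk]; abel⟩

theorem coversIn_of_add_α {A : Set E} {i : I} (h : μ + S.α i = ν) : S.CoversIn A μ ν := by
  refine ⟨wle_of_sub_eq_natCast_smul i 1 (by rw [← h]; simp),
    fun hμν => α_ne_zero (S := S) i ?_, ?_⟩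
  · rwa [← hμν, add_eq_left] at h
  · intro ξ _ hμξ hξν
    obtain ⟨m, hm⟩ := exists_height_eq_add_of_wle hμξ
    obtain ⟨n, hn⟩ := exists_height_eq_add_of_wle hξν
    have hmn : m + n = 1 := by
      have : S.height ν = S.height μ + 1 := by rw [← h, map_add, height_α]
      exact_mod_cast (by linarith : (m : ℝ) + n = 1)
    rcases (by omega : m = 0 ∨ n = 0) with rfl | rfl
    · exact .inl (eq_of_wle_of_height_eq hμξ (by simpa using hm.symm)).symm
    · exact .inr (eq_of_wle_of_height_eq hξν (by simpa using hn.symm))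

end Order

section Saturated

variable {A : Set E} {β : E} {μ ν : E}

theorem Saturated.sub_mem (hsat : S.Saturated A) (hν : ν ∈ A) (hβ : β ∈ S.Φ)
    (h : 1 ≤ ⟪ν, coroot β⟫) : ν - β ∈ A := by
  simpa using hsat ν hν β hβ 1 (.inl ⟨by norm_num, by exact_mod_cast h⟩)

theorem Saturated.add_mem (hsat : S.Saturated A) (hν : ν ∈ A) (hβ : β ∈ S.Φ)
    (h : ⟪ν, coroot β⟫ ≤ -1) : ν + β ∈ A := by
  simpa using hsat ν hν β hβ (-1) (.inr ⟨by exact_mod_cast h, by norm_num⟩)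

theorem Saturated.mem_string (hsat : S.Saturated A) (hβ : β ∈ S.Φ) {p : ℤ}
    (hp : ⟪μ, coroot β⟫ = p) (t : ℤ) (ht : μ + (t : ℝ) • β ∈ A) (k : ℤ)
    (hk : (t ≤ k ∧ k ≤ -p - t) ∨ (-p - t ≤ k ∧ k ≤ t)) : μ + (k : ℝ) • β ∈ A := by
  have hpair : ⟪μ + (t : ℝ) • β, coroot β⟫ = ((p + 2 * t : ℤ) : ℝ) := by
    rw [inner_add_smul_coroot (ne_zero_of_mem hβ), hp]
    push_cast
    ring
  have hmem := hsat _ ht β hβ (t - k) (by rw [hpair]; norm_cast; omega)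
  convert hmem using 1
  push_cast
  module

theorem Saturated.sub_eq_inner_coroot (hsat : S.Saturated A) (hβ : β ∈ S.Φ) {p : ℤ}
    (hp : ⟪μ, coroot β⟫ = p) {a b : ℕ} (ha : μ - (a : ℝ) • β ∈ A)
    (ha' : μ - ((a : ℝ) + 1) • β ∉ A) (hb : μ + (b : ℝ) • β ∈ A)
    (hb' : μ + ((b : ℝ) + 1) • β ∉ A) :
    (a : ℝ) - b = ⟪μ, coroot β⟫ := by
  have key := Int.eq_sub_of_reflect_closed (T := {t : ℤ | μ + (t : ℝ) • β ∈ A}) (a := a)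
    (b := b) (hsat.mem_string hβ hp) (by omega)
    (by rw [Set.mem_ofPred_eq]; convert ha using 2; push_cast; module)
    (fun h => ha' (by rw [Set.mem_ofPred_eq] at h; convert h using 2; push_cast; module))
    (by rw [Set.mem_ofPred_eq]; exact_mod_cast hb)
    (fun h => hb' (by rw [Set.mem_ofPred_eq] at h; convert h using 2; push_cast; module))
  rw [hp, key]
  push_cast
  ring

theorem Saturated.exists_add_α_of_coversIn (hA : ∀ μ ∈ A, S.IsWeight μ)
    (hsat : S.Saturated A) (hμ : μ ∈ A) (hν : ν ∈ A) (h : S.CoversIn A μ ν) :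
    ∃ i, μ + S.α i = ν := by
  obtain ⟨hle, hne, hcov⟩ := h
  obtain ⟨j, hj, hinner⟩ := S.αBasis.exists_repr_pos_inner_pos (sub_ne_zero.2 hne.symm)
    fun i => by obtain ⟨n, hn⟩ := wle_iff_repr.1 hle i; rw [hn]; positivity
  have hj1 : 1 ≤ S.αBasis.repr (ν - μ) j := by
    obtain ⟨n, hn⟩ := wle_iff_repr.1 hle j
    rw [hn] at hj ⊢
    exact Nat.one_le_cast.2 (by exact_mod_cast hj)
  obtain ⟨p, hp⟩ := (hA μ hμ).exists_inner_coroot_eq j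
  obtain ⟨q, hq⟩ := (hA ν hν).exists_inner_coroot_eq j
  have hpq : p < q := by
    have := inner_coroot_pos (α_ne_zero j) hinner
    rw [inner_sub_left, hp, hq, sub_pos] at this
    exact_mod_cast this
  by_cases hq1 : 1 ≤ q
  · have hmem := hsat.sub_mem hν (α_mem j) (by rw [hq]; exact_mod_cast hq1)
    rcases hcov _ hmem (wle_sub_α hle hj1) (wle_of_sub_eq_natCast_smul j 1 (by simp)) with h | h
    · exact ⟨j, by rw [← h]; abel⟩
    · exact absurd (sub_eq_self.1 h) (α_ne_zero j)
  · have hmem := hsat.add_mem hμ (α_mem j) (by rw [hp]; exact_mod_cast (by omega : p ≤ -1))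
    rcases hcov _ hmem (wle_of_sub_eq_natCast_smul j 1 (by simp)) (add_α_wle hle hj1) with h | h
    · exact absurd (add_eq_left.1 h) (α_ne_zero j)
    · exact ⟨j, h⟩

theorem Saturated.coversIn_iff (hA : ∀ μ ∈ A, S.IsWeight μ) (hsat : S.Saturated A)
    (hμ : μ ∈ A) (hν : ν ∈ A) : S.CoversIn A μ ν ↔ ∃ i, μ + S.α i = ν :=
  ⟨hsat.exists_add_α_of_coversIn hA hμ hν, fun ⟨_, h⟩ => coversIn_of_add_α h⟩

theorem Saturated.exists_rank (hA : ∀ μ ∈ A, S.IsWeight μ) (hsat : S.Saturated A)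
    (hfin : A.Finite) (hne : A.Nonempty) :
    ∃ (L : ℕ) (r : E → ℕ), (∀ n ≤ L, ∃ μ ∈ A, r μ = n) ∧ (∀ μ ∈ A, r μ ≤ L) ∧
      ∀ μ ∈ A, ∀ ν ∈ A, S.CoversIn A μ ν → r μ + 1 = r ν := by
  let Adj : E → E → Prop := fun x y => (x ∈ A ∧ y ∈ A) ∧ ∃ i, x + S.α i = y ∨ y + S.α i = x
  have : Std.Symm Adj := ⟨fun _ _ ⟨⟨hx, hy⟩, i, h⟩ => ⟨⟨hy, hx⟩, i, h.symm⟩⟩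
  obtain ⟨L, r, hsurj, hbound, hstep⟩ := exists_rank_of_adj (Adj := Adj)
    (h := fun x => ⌊S.height x⌋) hfin hne (fun _ _ h => h.1.2)
    (by rintro x y ⟨-, i, rfl | rfl⟩ <;> simp only [floor_height_add_α] <;> omega)
  refine ⟨L, r, hsurj, hbound, fun μ hμ ν hν hcov => ?_⟩
  obtain ⟨i, rfl⟩ := hsat.exists_add_α_of_coversIn hA hμ hν hcov
  have := hstep _ _ ⟨⟨hμ, hν⟩, i, .inl rfl⟩
  simp only [floor_height_add_α] at this
  omega

end Saturated

end RootSystemBase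

theorem statement11_general {E : Type*} [NormedAddCommGroup E] [InnerProductSpace ℝ E]
    {I : Type*} [Fintype I] [DecidableEq I]
    (S : RootSystemBase E I) (Wt : Set E)
    (hWt : ∀ μ ∈ Wt, S.IsWeight μ) (hfin : Wt.Finite) (hsat : S.Saturated Wt) :
    -- (1)
    (∀ μ ∈ Wt, ∀ ν ∈ Wt,
      (S.wle μ ν ∧ μ ≠ ν ∧ ∀ ξ ∈ Wt, S.wle μ ξ → S.wle ξ ν → ξ = μ ∨ ξ = ν)
        ↔ ∃ i, μ + S.α i = ν) ∧
    -- (2)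
    (∀ i : I, ∀ μ ∈ Wt, ∀ ν : E,
      Relation.ReflTransGen
        (fun x y => (x ∈ Wt ∧ y ∈ Wt) ∧ (x + S.α i = y ∨ y + S.α i = x)) μ ν →
      (∃ k : ℤ, ν - μ = (k : ℝ) • S.α i) ∧ (S.wle μ ν ∨ S.wle ν μ)) ∧
    -- (3)
    (Wt.Nonempty → ∃ (L : ℕ) (r : E → ℕ),
      (∀ m : ℕ, m ≤ L → ∃ μ ∈ Wt, r μ = m) ∧ (∀ μ ∈ Wt, r μ ≤ L) ∧
      ∀ μ ∈ Wt, ∀ ν ∈ Wt,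
        (S.wle μ ν ∧ μ ≠ ν ∧ ∀ ξ ∈ Wt, S.wle μ ξ → S.wle ξ ν → ξ = μ ∨ ξ = ν) →
        r μ + 1 = r ν) ∧
    -- (4)
    (∀ μ ∈ Wt, ∀ i : I, ∀ a b : ℕ,
      (∀ k : ℕ, k ≤ a → μ - (k : ℝ) • S.α i ∈ Wt) →
      (μ - ((a : ℝ) + 1) • S.α i ∉ Wt) →
      (∀ k : ℕ, k ≤ b → μ + (k : ℝ) • S.α i ∈ Wt) →
      (μ + ((b : ℝ) + 1) • S.α i ∉ Wt) →
      (a : ℝ) - (b : ℝ) = ⟪μ, coroot (S.α i)⟫) := by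
  refine ⟨fun μ hμ ν hν => hsat.coversIn_iff hWt hμ hν, ?_,
    fun hne => hsat.exists_rank hWt hfin hne, ?_⟩
  · intro i μ _ ν hpath
    obtain ⟨k, hk⟩ := exists_sub_eq_intCast_smul_of_reflTransGen
      (Relation.ReflTransGen.mono (fun _ _ h => h.2) _ _ hpath)
    exact ⟨⟨k, hk⟩, RootSystemBase.wle_or_wle_of_sub_eq_intCast_smul i k hk⟩
  · intro μ hμ i a b ha ha' hb hb'
    obtain ⟨p, hp⟩ := (hWt μ hμ).exists_inner_coroot_eq i
    exact hsat.sub_eq_inner_coroot (RootSystemBase.α_mem i) hp (ha a le_rfl) ha'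
      (hb b le_rfl) hb'

/-- **Proposition 3.6**:  let `𝒲 ⊂ Λ` be a finite saturated set of weights, viewed as a
subposet of `Λ`.  Then:  `(1)` `ν` covers `μ` in `𝒲` iff `μ + αᵢ = ν` for some `i`;
`(2)` coloring covering edges by the simple-root index, every `i`-component of `𝒲` lies
on a line `μ + ℤαᵢ` and is totally ordered (a chain);  `(3)` `𝒲` is ranked;
`(4)` for `μ ∈ 𝒲` and `i ∈ I`, `m_i(μ) = ρ_i(μ) - δ_i(μ) = ⟨μ, αᵢ∨⟩`, so `wt(μ) = μ` and
`𝒲` is `M_Φ`-structured. -/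
theorem statement11 {E : Type*} [NormedAddCommGroup E] [InnerProductSpace ℝ E]
    [FiniteDimensional ℝ E] {I : Type*} [Fintype I] [DecidableEq I]
    (S : RootSystemBase E I) (Wt : Set E)
    (hWt : ∀ μ ∈ Wt, S.IsWeight μ) (hfin : Wt.Finite) (hsat : S.Saturated Wt) :
    -- (1)
    (∀ μ ∈ Wt, ∀ ν ∈ Wt,
      (S.wle μ ν ∧ μ ≠ ν ∧ ∀ ξ ∈ Wt, S.wle μ ξ → S.wle ξ ν → ξ = μ ∨ ξ = ν)
        ↔ ∃ i, μ + S.α i = ν) ∧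
    -- (2)
    (∀ i : I, ∀ μ ∈ Wt, ∀ ν : E,
      Relation.ReflTransGen
        (fun x y => (x ∈ Wt ∧ y ∈ Wt) ∧ (x + S.α i = y ∨ y + S.α i = x)) μ ν →
      (∃ k : ℤ, ν - μ = (k : ℝ) • S.α i) ∧ (S.wle μ ν ∨ S.wle ν μ)) ∧
    -- (3)
    (Wt.Nonempty → ∃ (L : ℕ) (r : E → ℕ),
      (∀ m : ℕ, m ≤ L → ∃ μ ∈ Wt, r μ = m) ∧ (∀ μ ∈ Wt, r μ ≤ L) ∧
      ∀ μ ∈ Wt, ∀ ν ∈ Wt,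
        (S.wle μ ν ∧ μ ≠ ν ∧ ∀ ξ ∈ Wt, S.wle μ ξ → S.wle ξ ν → ξ = μ ∨ ξ = ν) →
        r μ + 1 = r ν) ∧
    -- (4)
    (∀ μ ∈ Wt, ∀ i : I, ∀ a b : ℕ,
      (∀ k : ℕ, k ≤ a → μ - (k : ℝ) • S.α i ∈ Wt) →
      (μ - ((a : ℝ) + 1) • S.α i ∉ Wt) →
      (∀ k : ℕ, k ≤ b → μ + (k : ℝ) • S.α i ∈ Wt) →
      (μ + ((b : ℝ) + 1) • S.α i ∉ Wt) →
      (a : ℝ) - (b : ℝ) = ⟪μ, coroot (S.α i)⟫) :=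
  statement11_general S Wt hWt hfin hsat
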